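/- arXiv:2108.03977 — 7 statements merged into one kernel-verified Lean document; each statement's English description precedes it below -/
import Mathlib

section
/- Let N be a linear order, a ∈ N, and κ a regular uncountable cardinal such that N_a = {x ∈ N : x < a} contains a strictly increasing cofinal sequence of length κ. Then for any ultrafilter U on ω, the initial segment below the class of the constant sequence a in the ultrapower N^ω/U has cofinality κ. -/
/-!
Every `g < a` in the ultrapower is represented by countably many values `f n < a`, each
lying below some `aᵢ` with `i < κ`; since `cof κ > ℵ₀`, one index `i` bounds them all, so
`g ≤ aᵢ`. Hence the constants `aᵢ` form a strictly increasing cofinal `κ`-sequence below `a`.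
-/

open Cardinal Filter Set

universe u

section

variable {ι : Type u} {N : Type u} {o : Ordinal.{u}} {ai : Ordinal → N} {a : N}

theorem Ordinal.exists_eventually_le_of_eventually_lt [Preorder N] {l : Filter ι}
    (hι : #ι < o.cof) (hmono : MonotoneOn ai (Iio o)) (hcof : ∀ x < a, ∃ i < o, x ≤ ai i)
    {f : ι → N} (hf : ∀ᶠ n in l, f n < a) : ∃ i < o, ∀ᶠ n in l, f n ≤ ai i := by
  have ho : 0 < o := Ordinal.cof_pos.1 (hι.trans_le' zero_le)
  have hbound (n : ι) : ∃ i < o, f n < a → f n ≤ ai i := by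
    by_cases hn : f n < a
    · obtain ⟨i, hio, hi⟩ := hcof (f n) hn
      exact ⟨i, hio, fun _ => hi⟩
    · exact ⟨0, ho, fun h => absurd h hn⟩
  choose I hIo hI using hbound
  have hsup : ⨆ n, I n < o := Ordinal.iSup_lt_of_lt_cof hι hIo
  refine ⟨⨆ n, I n, hsup, ?_⟩
  filter_upwards [hf] with n hn
  exact (hI n hn).trans (hmono (hIo n) hsup (Ordinal.le_iSup I n))

theorem Filter.Germ.cof_subtype_lt_const [LinearOrder N] {φ : Ultrafilter ι}
    (hι : #ι < o.cof) (hinc : StrictMonoOn ai (Iio o)) (hbelow : ∀ i < o, ai i < a)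
    (hcof : ∀ x < a, ∃ i < o, x ≤ ai i) :
    Order.cof {g : Germ (φ : Filter ι) N // g < ↑a} = o.cof := by
  let F : o.ToType → {g : Germ (φ : Filter ι) N // g < ↑a} := fun x =>
    ⟨↑(ai (Ordinal.ToType.mk.symm x)), Germ.const_lt (hbelow _ (Ordinal.ToType.mk.symm x).2)⟩
  have hF : StrictMono F := fun x y hxy =>
    Germ.const_lt (hinc (Ordinal.ToType.mk.symm x).2 (Ordinal.ToType.mk.symm y).2
      (Ordinal.ToType.mk.symm.lt_iff_lt.2 hxy))
  have hFcof : IsCofinal (range F) := by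
    rintro ⟨g, hg⟩
    induction g using Germ.inductionOn with | h f => ?_
    obtain ⟨i, hio, hi⟩ :=
      Ordinal.exists_eventually_le_of_eventually_lt hι hinc.monotoneOn hcof (Germ.coe_lt.1 hg)
    refine ⟨F (Ordinal.ToType.mk ⟨i, hio⟩), mem_range_self _, ?_⟩
    have hfi : (f : Germ (φ : Filter ι) N) ≤ ↑(ai i) := Germ.coe_le.2 hi
    simpa [F] using hfi
  rw [← Order.cof_congr_of_strictMono hF hFcof, Ordinal.cof_toType]

end

/-- If `κ` is regular uncountable and `N_a = {x : x < a}` contains a strictly increasing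
cofinal sequence of length `κ`, then for any ultrafilter `U` on `ω`, the initial segment below
the class of the constant sequence `a` in the ultrapower `N^ω/U` has cofinality `κ`. -/
theorem stmt4 {N : Type} [LinearOrder N] (a : N) (κ : Cardinal) (hreg : κ.IsRegular)
    (hunc : aleph0 < κ) (ai : Ordinal → N)
    (hinc : ∀ i j : Ordinal, i < j → j < κ.ord → ai i < ai j)
    (hbelow : ∀ i : Ordinal, i < κ.ord → ai i < a)
    (hcof : ∀ x : N, x < a → ∃ i : Ordinal, i < κ.ord ∧ x ≤ ai i)
    (U : Ultrafilter ℕ) :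
    Order.cof
        {g : Germ (U : Filter ℕ) N // g < ((fun _ : ℕ => a : ℕ → N) : Germ (U : Filter ℕ) N)}
        = κ := by
  have hnat : #ℕ < κ.ord.cof := by rwa [hreg.cof_ord, mk_nat]
  rw [← hreg.cof_ord]
  exact Filter.Germ.cof_subtype_lt_const hnat (fun i _ j hj hij => hinc i j hij hj) hbelow hcof
end

section
/- Assume 2^{ℵ₀} ≥ ℵ₂. Then there exist models M and N of the theory of dense linear orders without endpoints, of cardinalities ℵ₀ and ℵ₂ respectively (so M ≡ N), such that for no ultrafilter U on ω is M^ω/U isomorphic to N^ω/U. -/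
/-!
Take `M = ℚ` and `N = (ω₁ ×ₗ ℚ)ᵒᵈ ⊕ₗ (ω₂ ×ₗ ℚ)`. An isomorphism of the ultrapowers in the
language of orders is an order isomorphism of the germ orders `ℚ^ω/U ≃o N^ω/U`, and negation
makes `ℚ^ω/U` anti-isomorphic to itself, so `N^ω/U` would have equal cofinality and coinitiality.
But `ω₁` and `ω₂` have uncountable cofinality, so every sequence in `N` is bounded above and below
by a constant; the constants are therefore cofinal and coinitial in `N^ω/U`, whose cofinality is
then `ℵ₂` and whose coinitiality is `ℵ₁`.
-/

open Cardinal FirstOrder FirstOrder.Language Filter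

universe u

namespace Order

variable {α β : Type u} [LinearOrder α] [LinearOrder β]

theorem cof_sumLex_eq_right [Nonempty β] : cof (α ⊕ₗ β) = cof β := by
  refine (cof_congr_of_strictMono (f := fun b : β => toLex (Sum.inr b))
    (fun _ _ h => Sum.Lex.inr_lt_inr_iff.2 h) ?_).symm
  rintro (a | b)
  · exact ⟨_, ⟨Classical.arbitrary β, rfl⟩, Sum.Lex.inl_le_inr _ _⟩
  · exact ⟨_, ⟨b, rfl⟩, le_rfl⟩

theorem cof_prodLex_eq_left [NoMaxOrder α] (b : β) : cof (α ×ₗ β) = cof α := by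
  refine (cof_congr_of_strictMono (f := fun a : α => toLex (a, b))
    (fun _ _ h => Prod.Lex.toLex_lt_toLex.2 (Or.inl h)) ?_).symm
  rintro ⟨a, b'⟩
  obtain ⟨a', ha'⟩ := exists_gt a
  exact ⟨_, ⟨a', rfl⟩, (Prod.Lex.toLex_lt_toLex.2 (Or.inl ha')).le⟩

end Order

namespace Cardinal

theorem IsRegular.cof_toType {c : Cardinal} (hc : c.IsRegular) : Order.cof c.ord.ToType = c := by
  rw [Ordinal.cof_toType, hc.cof_ord]

theorem isRegular_aleph_two : (aleph 2).IsRegular := by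
  simpa only [one_add_one_eq_two] using isRegular_aleph_add_one 1

instance (o : Ordinal) : Nonempty (aleph o).ord.ToType := by
  rw [Ordinal.nonempty_toType_iff, Ne, ord_eq_zero]
  exact (aleph_pos o).ne'

instance (o : Ordinal) : NoMaxOrder (aleph o).ord.ToType :=
  Cardinal.noMaxOrder (aleph0_le_aleph o)

end Cardinal

namespace Filter

def Product.equivGerm {ι : Type*} (l : Filter ι) (A : Type*) : l.Product (fun _ => A) ≃ l.Germ A :=
  Equiv.refl _

namespace Germ

def orderDualIso {ι : Type*} (l : Filter ι) (α : Type*) [LE α] : (l.Germ α)ᵒᵈ ≃o l.Germ αᵒᵈ where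
  toEquiv := OrderDual.ofDual
  map_rel_iff' {x y} := by
    induction x using Germ.inductionOn
    induction y using Germ.inductionOn
    exact Iff.rfl

theorem cof_eq {ι α : Type u} [LinearOrder α] (φ : Ultrafilter ι) (h : #ι < Order.cof α) :
    Order.cof ((φ : Filter ι).Germ α) = Order.cof α := by
  refine (Order.cof_congr_of_strictMono (f := fun a : α => (a : (φ : Filter ι).Germ α))
    (fun _ _ => const_lt) ?_).symm
  intro x
  induction x using Germ.inductionOn with | h f =>
  have hf : ¬ IsCofinal (Set.range f) := fun hf =>
    ((Order.cof_le hf).trans mk_range_le).not_gt h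
  obtain ⟨b, hb⟩ : ∃ b, ∀ i, f i < b := by
    simpa [IsCofinal] using hf
  exact ⟨_, ⟨b, rfl⟩, coe_le.2 (Eventually.of_forall fun i => (hb i).le)⟩

theorem cof_orderDual_eq {ι α : Type u} [LinearOrder α] (φ : Ultrafilter ι)
    (h : #ι < Order.cof αᵒᵈ) : Order.cof ((φ : Filter ι).Germ α)ᵒᵈ = Order.cof αᵒᵈ :=
  (orderDualIso _ α).cof_congr.trans (cof_eq φ h)

end Germ

end Filter

namespace FirstOrder.Language

open Structure

theorem orderedStructure_orderStructure (A : Type*) [LE A] :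
    @OrderedStructure Language.order A _ _ (orderStructure A) :=
  @OrderedStructure.mk _ _ _ _ (orderStructure A) fun _ => Iff.rfl

variable {ι : Type*} {U : Ultrafilter ι} {A B : Type*}
  [LE A] [Language.order.Structure A] [Language.order.OrderedStructure A]
  [LE B] [Language.order.Structure B] [Language.order.OrderedStructure B]

theorem Ultraproduct.relMap_leSymb_iff (x y : (U : Filter ι).Product fun _ => A) :
    RelMap (leSymb : Language.order.Relations 2) ![x, y] ↔
      Product.equivGerm _ A x ≤ Product.equivGerm _ A y := by
  induction x using Quotient.inductionOn with | h f =>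
  induction y using Quotient.inductionOn with | h g =>
  have hfg : (![⟦f⟧, ⟦g⟧] : Fin 2 → (U : Filter ι).Product fun _ => A) =
      fun i => ⟦![f, g] i⟧ := by
    funext i; fin_cases i <;> rfl
  rw [hfg]
  exact (relMap_quotient_mk' _ leSymb ![f, g]).trans
    (eventually_congr (Eventually.of_forall fun n => relMap_leSymb _))

def Equiv.toGermOrderIso
    (g : ((U : Filter ι).Product fun _ => A) ≃[Language.order] (U : Filter ι).Product fun _ => B) :
    (U : Filter ι).Germ A ≃o (U : Filter ι).Germ B where
  toEquiv := ((Product.equivGerm _ A).symm.trans g.toEquiv).trans (Product.equivGerm _ B)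
  map_rel_iff' {x y} := by
    have h := StrongHomClass.map_rel g (leSymb : Language.order.Relations 2)
      ![(Product.equivGerm _ A).symm x, (Product.equivGerm _ A).symm y]
    rw [← FinVec.map_eq] at h
    exact (Ultraproduct.relMap_leSymb_iff _ _).symm.trans
      (h.trans (Ultraproduct.relMap_leSymb_iff _ _))

end FirstOrder.Language

abbrev BigDLO : Type := ((aleph 1).ord.ToType ×ₗ ℚ)ᵒᵈ ⊕ₗ ((aleph 2).ord.ToType ×ₗ ℚ)

theorem mk_bigDLO : #BigDLO = aleph 2 := by
  change #((_ × ℚ) ⊕ (_ × ℚ)) = _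
  simp

theorem cof_bigDLO : Order.cof BigDLO = aleph 2 := by
  rw [Order.cof_sumLex_eq_right, Order.cof_prodLex_eq_left 0, isRegular_aleph_two.cof_toType]

theorem cof_orderDual_bigDLO : Order.cof BigDLOᵒᵈ = aleph 1 := by
  rw [(OrderIso.sumLexDualAntidistrib _ _).cof_congr, Order.cof_sumLex_eq_right]
  exact (OrderIso.dualDual _).symm.cof_congr.trans
    ((Order.cof_prodLex_eq_left 0).trans isRegular_aleph_one.cof_toType)

theorem stmt6_general :
    ∃ (M N : Type) (_ : Language.order.Structure M) (_ : Language.order.Structure N),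
      M ⊨ Language.order.dlo ∧ N ⊨ Language.order.dlo ∧
      #M = aleph0 ∧ #N = aleph 2 ∧
      ∀ U : Ultrafilter ℕ,
        ¬ Nonempty (((U : Filter ℕ).Product fun _ => M) ≃[Language.order]
            ((U : Filter ℕ).Product fun _ => N)) := by
  let := orderStructure ℚ
  let := orderStructure BigDLO
  have := orderedStructure_orderStructure ℚ
  have := orderedStructure_orderStructure BigDLO
  refine ⟨ℚ, BigDLO, _, _, inferInstance, inferInstance, mkRat, mk_bigDLO, ?_⟩
  rintro U ⟨g⟩
  let e := g.toGermOrderIso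
  have hcof := (e.symm.trans ((OrderIso.neg _).trans e.dual)).cof_congr
  have hℕ₁ : #ℕ < Order.cof BigDLOᵒᵈ := by
    rw [cof_orderDual_bigDLO, mk_nat]
    exact aleph0_lt_aleph_one
  have hℕ₂ : #ℕ < Order.cof BigDLO := by
    rw [cof_bigDLO, mk_nat]
    exact aleph0_lt_aleph.2 two_pos
  rw [Filter.Germ.cof_orderDual_eq U hℕ₁, Filter.Germ.cof_eq U hℕ₂, cof_bigDLO,
    cof_orderDual_bigDLO] at hcof
  exact (aleph_lt_aleph.2 one_lt_two).ne' hcof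

/-- If `2^ℵ₀ ≥ ℵ₂`, there are models `M, N` of the theory of dense linear orders without
endpoints, of cardinalities `ℵ₀` and `ℵ₂` respectively, such that for no ultrafilter `U` on `ω`
are the ultrapowers `M^ω/U` and `N^ω/U` isomorphic. -/
theorem stmt6 (h : aleph 2 ≤ 2 ^ aleph0) :
    ∃ (M N : Type) (_ : Language.order.Structure M) (_ : Language.order.Structure N),
      M ⊨ Language.order.dlo ∧ N ⊨ Language.order.dlo ∧
      #M = aleph0 ∧ #N = aleph 2 ∧
      ∀ U : Ultrafilter ℕ,
        ¬ Nonempty (((U : Filter ℕ).Product fun _ => M) ≃[Language.order]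
            ((U : Filter ℕ).Product fun _ => N)) :=
  stmt6_general
end

section
/- Assume 2^{ℵ₀} ≥ ℵ₂. Then the Keisler criterion fails: there exist elementarily equivalent structures M, N in a countable language, each of size at most 2^{ℵ₀}, such that no ultrafilter U on ω satisfies M^ω/U ≅ N^ω/U. -/
/-!
Take `M = ω₁ ×ₗ ℚ` and `N = ω₂ ×ₗ ℚ`. Both are dense linear orders without endpoints, hence
elementarily equivalent, and `#N = ℵ₂ ≤ 2^ℵ₀`. In a linear order of uncountable cofinality every
countable set is bounded, so the diagonal embedding into an ultrapower indexed by `ℕ` is cofinal: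
the ultrapowers of `M` and `N` have cofinalities `ℵ₁` and `ℵ₂`, and cannot be isomorphic.
-/

open Cardinal FirstOrder FirstOrder.Language Filter

universe u

namespace Order

theorem bddAbove_of_mk_lt_cof {α : Type u} [LinearOrder α] {s : Set α} (h : #s < cof α) :
    BddAbove s := by
  by_contra hs
  exact (cof_le (IsCofinal.of_not_bddAbove hs)).not_gt h

theorem cof_lex_prod {α β : Type u} [LinearOrder α] [LinearOrder β] [NoMaxOrder α]
    [Nonempty β] : cof (α ×ₗ β) = cof α := by
  let b : β := Classical.arbitrary β
  refine (cof_congr_of_strictMono (f := fun a => toLex (a, b)) ?_ ?_).symm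
  · exact fun a a' h => Prod.Lex.toLex_lt_toLex.2 (Or.inl h)
  · rintro ⟨a, b'⟩
    obtain ⟨a', ha'⟩ := exists_gt a
    exact ⟨_, Set.mem_range_self a', (Prod.Lex.toLex_lt_toLex.2 (Or.inl ha')).le⟩

end Order

namespace Cardinal

theorem mk_ord_toType_lex_rat {c : Cardinal.{0}} (hc : ℵ₀ ≤ c) : #(c.ord.ToType ×ₗ ℚ) = c := by
  rw [← mk_congr toLex, mk_prod, lift_id, lift_id, mk_ord_toType, mk_denumerable]
  exact mul_eq_left hc hc aleph0_ne_zero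

theorem IsRegular.nonempty_ord_toType {c : Cardinal} (hc : c.IsRegular) :
    Nonempty c.ord.ToType :=
  Ordinal.nonempty_toType_iff.2 (ord_eq_zero.not.2 hc.pos.ne')

theorem IsRegular.cof_ord_toType_lex_rat {c : Cardinal.{0}} (hc : c.IsRegular) :
    Order.cof (c.ord.ToType ×ₗ ℚ) = c := by
  have := noMaxOrder hc.aleph0_le
  rw [Order.cof_lex_prod, Ordinal.cof_toType, hc.cof_ord]

end Cardinal

namespace FirstOrder.Language

instance orderedStructure_orderStructure_s7 {M : Type*} [LE M] :
    @Language.order.OrderedStructure M _ _ (orderStructure M) :=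
  letI := orderStructure M
  ⟨fun _ => Iff.rfl⟩

def Equiv.toOrderIso {L : Language} [L.IsOrdered] {M N : Type*}
    [L.Structure M] [LE M] [L.OrderedStructure M] [L.Structure N] [LE N] [L.OrderedStructure N]
    (g : M ≃[L] N) : M ≃o N :=
  haveI := StrongHomClass.toOrderIsoClass L M N (M ≃[L] N)
  OrderIsoClass.toOrderIso g

namespace Ultraproduct

variable {ι X : Type u} {U : Ultrafilter ι} [Language.order.Structure X] [LinearOrder X]
  [Language.order.OrderedStructure X] [Nonempty X]

instance : (U : Filter ι).Product (fun _ => X) ⊨ Language.order.linearOrderTheory :=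
  (Theory.model_iff _).2 fun φ hφ =>
    (sentence_realize φ).2 (.of_forall fun _ => Theory.realize_sentence_of_mem _ hφ)

noncomputable instance : LinearOrder ((U : Filter ι).Product fun _ => X) := by
  classical exact Language.order.linearOrderOfModels _

/- The type of `≤` is given explicitly: the coercion `(f : (U : Filter ι).Product _)` elaborates
to a term of type `Quotient _`, whose `≤` is the quotient preorder, not the ultrapower order. -/
theorem coe_le_coe {f g : ι → X} :
    LE.le (α := (U : Filter ι).Product fun _ => X) f g ↔ ∀ᶠ i in (U : Filter ι), f i ≤ g i := by
  have hfg : (![f, g] : Fin 2 → (U : Filter ι).Product fun _ => X) =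
      fun i => ((![f, g] i : ι → X) : (U : Filter ι).Product fun _ => X) := by
    funext i; fin_cases i <;> rfl
  refine (relMap_leSymb (L := Language.order) (M := (U : Filter ι).Product fun _ => X)
    ![f, g]).symm.trans ?_
  rw [hfg]
  refine (relMap_quotient_mk' _ _ _).trans (eventually_congr (.of_forall fun i => ?_))
  exact relMap_leSymb (L := Language.order) _

theorem cof_ultrapower (h : #ι < Order.cof X) :
    Order.cof ((U : Filter ι).Product fun _ => X) = Order.cof X := by
  refine (Order.cof_congr_of_strictMono (γ := (U : Filter ι).Product fun _ => X)
    (f := fun x => (fun _ => x : ι → X)) ?_ ?_).symm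
  · exact strictMono_of_le_iff_le fun x y => (coe_le_coe.trans eventually_const).symm
  · rintro ⟨f⟩
    obtain ⟨b, hb⟩ := Order.bddAbove_of_mk_lt_cof (mk_range_le.trans_lt h : #(Set.range f) < _)
    exact ⟨_, Set.mem_range_self b, coe_le_coe.2 (.of_forall fun i => hb ⟨i, rfl⟩)⟩

theorem cof_eq_of_equiv {Y : Type u} [Language.order.Structure Y] [LinearOrder Y]
    [Language.order.OrderedStructure Y] [Nonempty Y] (hX : #ι < Order.cof X)
    (hY : #ι < Order.cof Y)
    (g : ((U : Filter ι).Product fun _ => X) ≃[Language.order] (U : Filter ι).Product fun _ => Y) :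
    Order.cof X = Order.cof Y := by
  rw [← cof_ultrapower (U := U) hX, ← cof_ultrapower (U := U) hY, g.toOrderIso.cof_congr]

end Ultraproduct

end FirstOrder.Language

/-- If `2^ℵ₀ ≥ ℵ₂` then the Keisler criterion fails: there are elementarily equivalent
structures `M, N` in a countable language, each of size at most `2^ℵ₀`, such that no
ultrafilter `U` on `ω` satisfies `M^ω/U ≅ N^ω/U`. -/
theorem stmt7 (h : aleph 2 ≤ 2 ^ aleph0) :
    ∃ (L : FirstOrder.Language.{0,0}) (_ : L.card ≤ aleph0) (M N : Type)
      (_ : L.Structure M) (_ : L.Structure N),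
      #M ≤ 2 ^ aleph0 ∧ #N ≤ 2 ^ aleph0 ∧ (M ≅[L] N) ∧
      ∀ U : Ultrafilter ℕ,
        ¬ Nonempty (((U : Filter ℕ).Product fun _ => M) ≃[L]
            ((U : Filter ℕ).Product fun _ => N)) := by
  have h₀ : (ℵ_ 2 : Cardinal.{0}) ≤ 2 ^ ℵ₀ := by rw [← Cardinal.lift_le]; simpa using h
  have hreg₁ : (ℵ₁ : Cardinal.{0}).IsRegular := isRegular_aleph_one
  have hreg₂ : (ℵ_ 2 : Cardinal.{0}).IsRegular :=
    one_add_one_eq_two (R := Ordinal) ▸ isRegular_aleph_add_one 1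
  have h₁₂ : (ℵ₁ : Cardinal.{0}) < ℵ_ 2 := aleph_lt_aleph.2 one_lt_two
  have := hreg₁.nonempty_ord_toType
  have := hreg₂.nonempty_ord_toType
  let := orderStructure ((ℵ₁ : Cardinal.{0}).ord.ToType ×ₗ ℚ)
  let := orderStructure ((ℵ_ 2 : Cardinal.{0}).ord.ToType ×ₗ ℚ)
  refine ⟨Language.order, order.card_eq_one.trans_le one_le_aleph0,
    (ℵ₁ : Cardinal.{0}).ord.ToType ×ₗ ℚ, (ℵ_ 2 : Cardinal.{0}).ord.ToType ×ₗ ℚ,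
    inferInstance, inferInstance, ?_, ?_,
    dlo_isComplete.models_elementarily_equivalent _ _, ?_⟩
  · rw [mk_ord_toType_lex_rat hreg₁.aleph0_le]
    exact h₁₂.le.trans h₀
  · rw [mk_ord_toType_lex_rat hreg₂.aleph0_le]
    exact h₀
  · rintro U ⟨g⟩
    have hcof := Ultraproduct.cof_eq_of_equiv
      (by rw [mk_nat, hreg₁.cof_ord_toType_lex_rat]; exact aleph0_lt_aleph_one)
      (by rw [mk_nat, hreg₂.cof_ord_toType_lex_rat]; exact aleph0_lt_aleph_one.trans h₁₂) g
    rw [hreg₁.cof_ord_toType_lex_rat, hreg₂.cof_ord_toType_lex_rat] at hcof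
    exact h₁₂.ne hcof
end

section
/- If U is a nonprincipal ultrafilter on ω and M is an infinite structure in a countable language, then the ultrapower M^ω/U is ℵ₁-saturated. -/
open Cardinal FirstOrder FirstOrder.Language Filter

/-- A structure is `ℵ₁`-saturated if every type over a countable set of parameters that is
finitely satisfiable in the structure is realized in it. -/
def Aleph1Saturated (L : FirstOrder.Language.{0,0}) (M : Type*) [L.Structure M] : Prop :=
  ∀ (f : ℕ → M) (Φ : Set (L.Formula (ℕ ⊕ Unit))),
    (∀ s : Finset (L.Formula (ℕ ⊕ Unit)), ↑s ⊆ Φ →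
      ∃ x : M, ∀ φ ∈ s, Formula.Realize φ (Sum.elim f fun _ => x)) →
    ∃ x : M, ∀ φ ∈ Φ, Formula.Realize φ (Sum.elim f fun _ => x)

/-!
Enumerate the countably many formulas of the type as `φ₀, φ₁, …`. By Łoś's theorem, for each `n`
the coordinates at which `φ₀, …, φₙ` are simultaneously satisfiable form a set in `U`. At
coordinate `i` pick a witness for the largest `n ≤ i` that works. Since `U` contains every
cofinite set, for each `k` almost every coordinate has `k ≤ i`, so its witness satisfies `φₖ`;
by Łoś again the element of the ultrapower they define realizes the whole type.
-/

theorem Filter.exists_forall_eventually_of_le_cofinite {l : Filter ℕ} (hl : l ≤ cofinite)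
    {M : ℕ → Type*} [∀ i, Nonempty (M i)] (R : ℕ → ∀ i, M i → Prop)
    (h : ∀ n, ∀ᶠ i in l, ∃ m, ∀ k ≤ n, R k i m) :
    ∃ w : ∀ i, M i, ∀ k, ∀ᶠ i in l, R k i (w i) := by
  classical
  let P : ℕ → ℕ → Prop := fun n i => ∃ m, ∀ k ≤ n, R k i m
  let c i := Nat.findGreatest (P · i) i
  have hw : ∀ i, ∃ m : M i, P (c i) i → ∀ k ≤ c i, R k i m := fun i => by
    by_cases hi : P (c i) i
    · obtain ⟨m, hm⟩ := hi
      exact ⟨m, fun _ => hm⟩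
    · exact ⟨Classical.arbitrary _, fun hi' => absurd hi' hi⟩
  choose w hw using hw
  refine ⟨w, fun k => ?_⟩
  filter_upwards [h k, hl (Nat.cofinite_eq_atTop ▸ eventually_ge_atTop k)] with i hki hik
  exact hw i (Nat.findGreatest_spec (P := (P · i)) hik hki) k (Nat.le_findGreatest hik hki)

namespace FirstOrder.Language.Ultraproduct

variable {L : Language} {β : Type*}

theorem realize_sumElim_cast {α : Type*} {M : α → Type*} {U : Ultrafilter α}
    [∀ a, L.Structure (M a)] [∀ a, Nonempty (M a)] (φ : L.Formula (β ⊕ Unit))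
    (g : β → ∀ a, M a) (w : ∀ a, M a) :
    φ.Realize (Sum.elim (fun j => (g j : (U : Filter α).Product M))
        fun _ => (w : (U : Filter α).Product M)) ↔
      ∀ᶠ a in (U : Filter α), φ.Realize (Sum.elim (fun j => g j a) fun _ => w a) := by
  have := realize_formula_cast (u := U) φ (Sum.elim g fun _ : Unit => w)
  convert this using 2
  · ext (_ | _) <;> rfl
  · congr! 2 with a
    ext (_ | _) <;> rfl

theorem exists_forall_realize_of_le_cofinite {M : ℕ → Type*} {U : Ultrafilter ℕ}
    [∀ i, L.Structure (M i)] [∀ i, Nonempty (M i)]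
    (hU : (U : Filter ℕ) ≤ cofinite) (f : β → (U : Filter ℕ).Product M)
    (φ : ℕ → L.Formula (β ⊕ Unit))
    (hφ : ∀ s : Finset ℕ, ∃ x, ∀ k ∈ s, (φ k).Realize (Sum.elim f fun _ => x)) :
    ∃ x, ∀ k, (φ k).Realize (Sum.elim f fun _ => x) := by
  obtain ⟨g, rfl⟩ : ∃ g : β → ∀ i, M i, f = fun j => (g j : (U : Filter ℕ).Product M) :=
    ⟨fun j => (f j).out, funext fun j => (Quotient.out_eq _).symm⟩
  have finite_stage (n : ℕ) :
      ∀ᶠ i in (U : Filter ℕ), ∃ m,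
        ∀ k ≤ n, (φ k).Realize (Sum.elim (fun j => g j i) fun _ => m) := by
    obtain ⟨x, hx⟩ := hφ (Finset.Iic n)
    induction x using Quotient.inductionOn with | h w => ?_
    have hw : ∀ k ∈ Set.Iic n, ∀ᶠ i in (U : Filter ℕ),
        (φ k).Realize (Sum.elim (fun j => g j i) fun _ => w i) := fun k hk =>
      (realize_sumElim_cast _ g w).1 (hx k (Finset.mem_Iic.2 hk))
    filter_upwards [(eventually_all_finite (Set.finite_Iic n)).2 hw] with i hi
    exact ⟨w i, hi⟩
  obtain ⟨w, hw⟩ := exists_forall_eventually_of_le_cofinite hU _ finite_stage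
  exact ⟨w, fun k => (realize_sumElim_cast _ g w).2 (hw k)⟩

end FirstOrder.Language.Ultraproduct

open FirstOrder.Language.Ultraproduct in
theorem stmt8_general (L : FirstOrder.Language.{0,0}) (hL : L.card ≤ aleph0) (M : Type)
    [L.Structure M] (U : Ultrafilter ℕ) (hU : (U : Filter ℕ) ≤ Filter.cofinite) :
    Aleph1Saturated L ((U : Filter ℕ).Product fun _ => M) := by
  classical
  intro f Φ hΦ
  have : Nonempty M := ⟨(f 0).out 0⟩
  have : Countable L.Symbols := mk_le_aleph0_iff.1 hL
  rcases Φ.eq_empty_or_nonempty with rfl | hne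
  · exact ⟨f 0, by simp⟩
  obtain ⟨φ, rfl⟩ := Φ.to_countable.exists_eq_range hne
  obtain ⟨x, hx⟩ := exists_forall_realize_of_le_cofinite hU f φ fun s => by
    simpa using hΦ (s.image φ) (by simp)
  exact ⟨x, Set.forall_mem_range.2 hx⟩

/-- If `U` is a nonprincipal ultrafilter on `ω` and `M` is an infinite structure in a
countable language, then the ultrapower `M^ω/U` is `ℵ₁`-saturated. -/
theorem stmt8 (L : FirstOrder.Language.{0,0}) (hL : L.card ≤ aleph0) (M : Type)
    [L.Structure M] [Infinite M] (U : Ultrafilter ℕ) (hU : (U : Filter ℕ) ≤ Filter.cofinite) :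
    Aleph1Saturated L ((U : Filter ℕ).Product fun _ => M) :=
  stmt8_general L hL M U hU
end

section
/- If U is a nonprincipal ultrafilter on ω and M is an infinite structure of cardinality at most 2^{ℵ₀}, then the ultrapower M^ω/U has cardinality exactly 2^{ℵ₀}. -/
/-!
The bound `#(M^ω/U) ≤ #M ^ ℵ₀ ≤ (2 ^ ℵ₀) ^ ℵ₀ = 2 ^ ℵ₀` holds for any filter. Conversely, fixing
an injection `ℤ ↪ M`, send a real `r` to the class of `n ↦ ⌊n r⌋`. Two distinct reals `r ≠ s`
give sequences that differ as soon as `n |r - s| ≥ 1`, i.e. on a cofinite set, which a nonprincipal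
ultrafilter contains; so this map `ℝ → M^ω/U` is injective.
-/

open Cardinal Filter

theorem Int.floor_nat_mul_eventually_ne {r s : ℝ} (hrs : r ≠ s) :
    ∀ᶠ n : ℕ in cofinite, ⌊n * r⌋ ≠ ⌊n * s⌋ := by
  have hd : 0 < |r - s| := abs_pos.mpr (sub_ne_zero.mpr hrs)
  rw [Nat.cofinite_eq_atTop]
  filter_upwards [eventually_ge_atTop ⌈1 / |r - s|⌉₊] with n hn hfloor
  have hclose := Int.abs_sub_lt_one_of_floor_eq_floor hfloor
  rw [← mul_sub, abs_mul, Nat.abs_cast] at hclose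
  have hn' : 1 / |r - s| ≤ n := (Nat.ceil_le).mp hn
  rw [div_le_iff₀ hd] at hn'
  linarith

theorem Filter.Germ.coe_injective_of_eventually_ne {α ι β : Type*} {l : Filter α} [l.NeBot]
    {f : ι → α → β} (hf : Pairwise fun i j => ∀ᶠ a in l, f i a ≠ f j a) :
    Function.Injective fun i => (f i : Germ l β) := by
  intro i j hij
  by_contra hne
  have hagree : ∀ᶠ a in l, f i a = f j a := Germ.coe_eq.mp hij
  exact (hagree.and (hf hne)).exists.elim fun _ h => h.2 h.1

theorem Cardinal.mk_germ_le {α β : Type*} (l : Filter α) : #(Germ l β) ≤ #(α → β) :=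
  mk_quotient_le

theorem Cardinal.continuum_le_mk_germ_of_le_cofinite (M : Type*) [Infinite M] {l : Filter ℕ}
    [l.NeBot] (hl : l ≤ cofinite) : 𝔠 ≤ #(Germ l M) := by
  let e : ℤ ↪ M := (Encodable.encode' ℤ).trans (Infinite.natEmbedding M)
  have hinj : Function.Injective fun r : ℝ => ((fun n : ℕ => e ⌊n * r⌋ : ℕ → M) : Germ l M) :=
    Germ.coe_injective_of_eventually_ne fun r s hrs =>
      hl <| (Int.floor_nat_mul_eventually_ne hrs).mono fun _ hne heq => hne (e.injective heq)
  simpa [mk_real] using lift_mk_le_lift_mk_of_injective hinj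

/-- If `U` is a nonprincipal ultrafilter on `ω` and `M` is an infinite set of cardinality at
most `2^ℵ₀`, then the ultrapower `M^ω/U` has cardinality exactly `2^ℵ₀`. -/
theorem stmt9 (M : Type) [Infinite M] (hM : #M ≤ 2 ^ aleph0)
    (U : Ultrafilter ℕ) (hU : (U : Filter ℕ) ≤ Filter.cofinite) :
    #(Germ (U : Filter ℕ) M) = 2 ^ aleph0 := by
  apply le_antisymm
  · calc #(Germ (U : Filter ℕ) M) ≤ #(ℕ → M) := mk_germ_le _
      _ = #M ^ aleph0 := by rw [← power_def, mk_nat]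
      _ ≤ (2 ^ aleph0) ^ aleph0 := power_le_power_right hM
      _ = 2 ^ aleph0 := by rw [← power_mul, aleph0_mul_aleph0]
  · exact continuum_le_mk_germ_of_le_cofinite M hU
end

section
/- Assume CH (2^{ℵ₀} = ℵ₁). If M and N are elementarily equivalent infinite structures of cardinality at most 2^{ℵ₀} in a countable language, then for every nonprincipal ultrafilter U on ω, M^ω/U ≅ N^ω/U. -/
/-!
By Łoś's theorem the two ultrapowers are elementarily equivalent. They are also countably
saturated: given a countable type finitely satisfiable in `M^ω/U`, pick for each `n` an element
satisfying its first `n` formulas; at coordinate `m` use a witness for more and more formulas as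
`m` grows along `U`. Under CH both ultrapowers have cardinality at most `(2^ℵ₀)^ℵ₀ = ℵ₁`.
Enumerate both in order type `ω₁` and build, by back and forth, an increasing `ω₁`-chain of
countable partial elementary maps, extended by saturation at each stage; its union is an
isomorphism.
-/

open Cardinal FirstOrder FirstOrder.Language Filter Set Function

universe u v w

theorem Filter.exists_tendsto_atTop_eventually_mem {l : Filter ℕ} (hl : l ≤ cofinite)
    {A : ℕ → Set ℕ} (hA : ∀ n, A n ∈ l) :
    ∃ d : ℕ → ℕ, Tendsto d l atTop ∧ ∀ᶠ m in l, m ∈ A (d m) := by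
  classical
  refine ⟨fun m => Nat.findGreatest (m ∈ A ·) m, tendsto_atTop.2 fun k => ?_,
    mem_of_superset (hA 0) fun m hm => Nat.findGreatest_spec (P := (m ∈ A ·)) (Nat.zero_le m) hm⟩
  have hk : ∀ᶠ m in l, k ≤ m := hl (Nat.cofinite_eq_atTop ▸ Ici_mem_atTop k)
  filter_upwards [hA k, hk] with m hm hkm using Nat.le_findGreatest hkm hm

theorem Cardinal.two_power_aleph0_eq_aleph_one_congr_univ
    (h : (2 : Cardinal.{u}) ^ ℵ₀ = ℵ₁) : (2 : Cardinal.{v}) ^ ℵ₀ = ℵ₁ := by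
  apply lift_injective.{u}
  simpa using congrArg lift.{v} h

namespace FirstOrder.Language

variable {L : Language.{u, v}}

section PartialElementary

variable {A B : Type w} [L.Structure A] [L.Structure B]

variable (L) in
/-- Partial elementary maps, given by their graphs. -/
def IsPartialElementary (p : Set (A × B)) : Prop :=
  ∀ φ : L.Formula p, φ.Realize (fun x => x.1.1) ↔ φ.Realize (fun x => x.1.2)

theorem ElementarilyEquivalent.isPartialElementary_empty (he : A ≅[L] B) :
    L.IsPartialElementary (∅ : Set (A × B)) := fun φ => by
  have := he.realize_sentence (φ.relabel isEmptyElim)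
  rw [Sentence.Realize, Sentence.Realize, Formula.realize_relabel,
    Formula.realize_relabel] at this
  convert this using 2 <;> exact Subsingleton.elim _ _

namespace IsPartialElementary

variable {p q : Set (A × B)}

theorem realize_iff (hp : L.IsPartialElementary p) {α : Type*} (φ : L.Formula α)
    (c : α → p) :
    φ.Realize (fun i => (c i).1.1) ↔ φ.Realize (fun i => (c i).1.2) := by
  have := hp (φ.relabel c)
  rwa [Formula.realize_relabel, Formula.realize_relabel] at this

theorem mono (hp : L.IsPartialElementary p) (hqp : q ⊆ p) : L.IsPartialElementary q :=
  fun φ => hp.realize_iff φ (inclusion hqp)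

theorem swap (hp : L.IsPartialElementary p) : L.IsPartialElementary (Prod.swap ⁻¹' p) :=
  fun φ => (hp.realize_iff φ fun x => ⟨x.1.swap, x.2⟩).symm

theorem eq_of_mem {a : A} {b b' : B} (hp : L.IsPartialElementary p) (h : (a, b) ∈ p)
    (h' : (a, b') ∈ p) : b = b' := by
  simpa using hp.realize_iff ((Term.var 0).equal (Term.var 1)) ![⟨_, h⟩, ⟨_, h'⟩]

theorem iUnion {ι : Type*} (he : A ≅[L] B) {F : ι → Set (A × B)} (hF : Directed (· ⊆ ·) F)
    (h : ∀ i, L.IsPartialElementary (F i)) : L.IsPartialElementary (⋃ i, F i) := by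
  classical
  rcases isEmpty_or_nonempty ι with hι | hι
  · rw [iUnion_of_empty]
    exact he.isPartialElementary_empty
  intro φ
  obtain ⟨i, hi⟩ := hF.exists_mem_subset_of_finset_subset_biUnion
    (s := φ.freeVarFinset.image Subtype.val)
    (by rw [Finset.coe_image]; exact image_subset_iff.2 fun x _ => x.2)
  -- a formula only involves finitely many pairs, and these all lie in one member of the family
  have := h i (φ.restrictFreeVar fun x =>
    ⟨x.1.1, hi (Finset.mem_coe.2 (Finset.mem_image_of_mem _ x.2))⟩)
  rwa [Formula.Realize, Formula.Realize,
    BoundedFormula.realize_restrictFreeVar (fun x => x.1.1) (by intro; rfl),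
    BoundedFormula.realize_restrictFreeVar (fun x => x.1.2) (by intro; rfl)] at this

theorem nonempty_equiv {P : Set (A × B)} (hP : L.IsPartialElementary P)
    (hdom : ∀ a, ∃ b, (a, b) ∈ P) (hcod : ∀ b, ∃ a, (a, b) ∈ P) : Nonempty (A ≃[L] B) := by
  choose f hf using hdom
  let F : A ↪ₑ[L] B := ⟨f, fun _ φ x => (hP.realize_iff φ fun i => ⟨_, hf (x i)⟩).symm⟩
  have hF : Surjective F := fun b =>
    let ⟨a, ha⟩ := hcod b
    ⟨a, hP.eq_of_mem (hf a) ha⟩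
  exact ⟨⟨Equiv.ofBijective F ⟨F.injective, hF⟩, F.map_fun, F.map_rel⟩⟩

end IsPartialElementary

end PartialElementary

variable (L) in
/-- `ℵ₁`-saturation: the countably many formulas `T k` involve only countably many parameters. -/
def CountablySaturated (M : Type w) [L.Structure M] : Prop :=
  ∀ {ι : Type w} (v : ι → M) (T : ℕ → L.Formula (ι ⊕ Unit)),
    (∀ n, ∃ b : M, ∀ k ≤ n, (T k).Realize (Sum.elim v fun _ => b)) →
      ∃ b : M, ∀ k, (T k).Realize (Sum.elim v fun _ => b)

section Extension

variable [Countable L.Symbols] {A B : Type w} [L.Structure A] [L.Structure B]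
  {p : Set (A × B)}

namespace IsPartialElementary

theorem exists_forth (hp : L.IsPartialElementary p) (hB : L.CountablySaturated B)
    (hc : p.Countable) (a : A) : ∃ b, L.IsPartialElementary (insert (a, b) p) := by
  classical
  have : Countable p := hc.to_subtype
  set va : p ⊕ Unit → A := Sum.elim (fun x => x.1.1) fun _ => a
  set vb : B → p ⊕ Unit → B := fun b => Sum.elim (fun x => x.1.2) fun _ => b
  obtain ⟨T, hT⟩ := (to_countable {θ : L.Formula (p ⊕ Unit) | θ.Realize va}).exists_eq_range
    ⟨⊤, Formula.realize_top.2 trivial⟩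
  have hTa : ∀ k, (T k).Realize va := fun k => (hT.symm ▸ mem_range_self k :)
  -- finitely many formulas of the type of `a` over `p` are satisfied together by some `b`,
  -- since their existential closure is a formula over `p`
  have hfin : ∀ n, ∃ b, ∀ k ≤ n, (T k).Realize (vb b) := by
    intro n
    have hA : ((Formula.iInf fun k : Fin (n + 1) => T k).iExs Unit).Realize fun x : p => x.1.1 :=
      Formula.realize_iExs.2 ⟨fun _ => a, Formula.realize_iInf.2 fun k => hTa k⟩
    obtain ⟨w, hw⟩ := Formula.realize_iExs.1 ((hp _).1 hA)
    exact ⟨w (), fun k hk => Formula.realize_iInf.1 hw ⟨k, Nat.lt_succ_of_le hk⟩⟩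
  obtain ⟨b, hb⟩ := hB _ T hfin
  have hab : ∀ θ : L.Formula (p ⊕ Unit), θ.Realize va → θ.Realize (vb b) := fun θ hθ => by
    obtain ⟨k, rfl⟩ : θ ∈ range T := hT ▸ hθ
    exact hb k
  have htp : ∀ θ : L.Formula (p ⊕ Unit), θ.Realize va ↔ θ.Realize (vb b) := fun θ =>
    ⟨hab θ, fun h => by_contra fun h' => Formula.realize_not.1 (hab θ.not h') h⟩
  refine ⟨b, fun φ => ?_⟩
  let g : ↥(insert (a, b) p) → p ⊕ Unit := fun x =>
    if hx : x.1 ∈ p then Sum.inl ⟨x.1, hx⟩ else Sum.inr ()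
  have hg : ∀ x, va (g x) = x.1.1 ∧ vb b (g x) = x.1.2 := by
    rintro ⟨x, hx⟩
    by_cases hxp : x ∈ p
    · simp [g, hxp, va, vb]
    · obtain rfl := (mem_insert_iff.1 hx).resolve_right hxp
      simp [g, hxp, va, vb]
  have := htp (φ.relabel g)
  rw [Formula.realize_relabel, Formula.realize_relabel] at this
  convert this using 2 <;> funext x
  exacts [(hg x).1.symm, (hg x).2.symm]

theorem exists_back (hp : L.IsPartialElementary p) (hA : L.CountablySaturated A)
    (hc : p.Countable) (b : B) : ∃ a, L.IsPartialElementary (insert (a, b) p) := by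
  obtain ⟨a, ha⟩ := hp.swap.exists_forth hA (hc.preimage Prod.swap_injective) b
  refine ⟨a, ha.swap.mono ?_⟩
  rintro ⟨x, y⟩ h
  simpa [and_comm] using h

end IsPartialElementary

end Extension

section BackAndForth

variable {A B : Type w} [L.Structure A] [L.Structure B]

variable (L) in
noncomputable def forthStep [Nonempty B] (p : Set (A × B)) (a : A) : Set (A × B) :=
  insert (a, Classical.epsilon fun b => L.IsPartialElementary (insert (a, b) p)) p

variable (L) in
noncomputable def backStep [Nonempty A] (p : Set (A × B)) (b : B) : Set (A × B) :=
  insert (Classical.epsilon fun a => L.IsPartialElementary (insert (a, b) p), b) p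

section Steps

variable [Countable L.Symbols] {p : Set (A × B)}

theorem IsPartialElementary.forthStep [Nonempty B] (hp : L.IsPartialElementary p)
    (hB : L.CountablySaturated B) (hc : p.Countable) (a : A) :
    L.IsPartialElementary (forthStep L p a) :=
  Classical.epsilon_spec (hp.exists_forth hB hc a)

theorem IsPartialElementary.backStep [Nonempty A] (hp : L.IsPartialElementary p)
    (hA : L.CountablySaturated A) (hc : p.Countable) (b : B) :
    L.IsPartialElementary (backStep L p b) :=
  Classical.epsilon_spec (hp.exists_back hA hc b)

end Steps

variable [Nonempty A] [Nonempty B] {κ : Type*} [LinearOrder κ] [WellFoundedLT κ]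
  (eA : κ → A) (eB : κ → B)

section

variable (L)

noncomputable def backForthChain : κ → Set (A × B) :=
  WellFoundedLT.fix fun i chain =>
    backStep L (forthStep L (⋃ j : Iio i, chain j j.2) (eA i)) (eB i)

theorem backForthChain_eq (i : κ) :
    backForthChain L eA eB i =
      backStep L (forthStep L (⋃ j : Iio i, backForthChain L eA eB j) (eA i)) (eB i) :=
  WellFoundedLT.fix_eq _ i

theorem subset_backForthChain (i : κ) :
    ⋃ j : Iio i, backForthChain L eA eB j ⊆ backForthChain L eA eB i := by
  rw [backForthChain_eq L eA eB i]
  exact (subset_insert _ _).trans (subset_insert _ _)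

theorem backForthChain_mono : Monotone (backForthChain L eA eB) := by
  intro j i hji
  rcases hji.eq_or_lt with rfl | hji
  · rfl
  · exact (subset_iUnion_of_subset ⟨j, hji⟩ subset_rfl).trans (subset_backForthChain L eA eB i)

theorem fst_mem_backForthChain (i : κ) : ∃ b, (eA i, b) ∈ backForthChain L eA eB i := by
  rw [backForthChain_eq]
  exact ⟨_, mem_insert_of_mem _ (mem_insert _ _)⟩

theorem snd_mem_backForthChain (i : κ) : ∃ a, (a, eB i) ∈ backForthChain L eA eB i := by
  rw [backForthChain_eq]
  exact ⟨_, mem_insert _ _⟩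

theorem backForthChain_countable (hκ : ∀ i : κ, (Iio i).Countable) (i : κ) :
    (backForthChain L eA eB i).Countable := by
  induction i using WellFoundedLT.induction with
  | ind i ih =>
    have := (hκ i).to_subtype
    rw [backForthChain_eq]
    exact ((countable_iUnion fun j : Iio i => ih j j.2).insert _).insert _

end

theorem isPartialElementary_backForthChain [Countable L.Symbols]
    (hκ : ∀ i : κ, (Iio i).Countable) (he : A ≅[L] B) (hA : L.CountablySaturated A)
    (hB : L.CountablySaturated B) (i : κ) :
    L.IsPartialElementary (backForthChain L eA eB i) := by
  induction i using WellFoundedLT.induction with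
  | ind i ih =>
    have := (hκ i).to_subtype
    have hU : L.IsPartialElementary (⋃ j : Iio i, backForthChain L eA eB j) :=
      .iUnion he ((backForthChain_mono L eA eB).comp (Subtype.mono_coe _)).directed_le
        fun j => ih j j.2
    have hUc := countable_iUnion fun j : Iio i => backForthChain_countable L eA eB hκ j
    rw [backForthChain_eq]
    exact (hU.forthStep hB hUc _).backStep hA (hUc.insert _) _

theorem ElementarilyEquivalent.nonempty_equiv_of_countablySaturated [Countable L.Symbols]
    (he : A ≅[L] B) (hA : L.CountablySaturated A) (hB : L.CountablySaturated B)
    (hA₁ : #A ≤ ℵ₁) (hB₁ : #B ≤ ℵ₁) : Nonempty (A ≃[L] B) := by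
  let κ := (ℵ₁ : Cardinal.{w}).ord.ToType
  have hκ₁ : #κ = ℵ₁ := by simp [κ]
  have hκ : ∀ i : κ, (Iio i).Countable := fun i => by
    have := mk_Iio_lt i (by simp [κ])
    rwa [hκ₁, lt_aleph_one_iff, le_aleph0_iff_set_countable] at this
  obtain ⟨eA, heA⟩ := exists_surjective_iff.2 ⟨⟨fun _ => Classical.arbitrary A⟩, hκ₁ ▸ hA₁⟩
  obtain ⟨eB, heB⟩ := exists_surjective_iff.2 ⟨⟨fun _ => Classical.arbitrary B⟩, hκ₁ ▸ hB₁⟩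
  have hP : L.IsPartialElementary (⋃ i, backForthChain L eA eB i) :=
    .iUnion he (backForthChain_mono L eA eB).directed_le
      (isPartialElementary_backForthChain eA eB hκ he hA hB)
  refine hP.nonempty_equiv (fun a => ?_) (fun b => ?_)
  · obtain ⟨i, rfl⟩ := heA a
    obtain ⟨b, hb⟩ := fst_mem_backForthChain L eA eB i
    exact ⟨b, mem_iUnion_of_mem i hb⟩
  · obtain ⟨i, rfl⟩ := heB b
    obtain ⟨a, ha⟩ := snd_mem_backForthChain L eA eB i
    exact ⟨a, mem_iUnion_of_mem i ha⟩

end BackAndForth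

namespace Ultraproduct

section

variable {α : Type*} {M : α → Type*} [∀ a, L.Structure (M a)] [∀ a, Nonempty (M a)]
  {u : Ultrafilter α}

theorem realize_formula_sumElim_cast {ι β : Type*} (φ : L.Formula (ι ⊕ β))
    (x : ι → ∀ a, M a) (y : β → ∀ a, M a) :
    φ.Realize (Sum.elim (fun i => x i) (fun j => y j) : ι ⊕ β → (u : Filter α).Product M) ↔
      ∀ᶠ a in u, φ.Realize (Sum.elim (fun i => x i a) fun j => y j a) := by
  convert realize_formula_cast (u := u) φ (Sum.elim x y) using 1
  · exact iff_of_eq (congrArg _ (by ext (i | j) <;> rfl))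
  · exact eventually_congr (.of_forall fun a => iff_of_eq (congrArg _ (by ext (i | j) <;> rfl)))

end

variable {M : Type w} [L.Structure M] (U : Ultrafilter ℕ)

theorem countablySaturated [Nonempty M] (hU : (U : Filter ℕ) ≤ cofinite) :
    L.CountablySaturated ((U : Filter ℕ).Product fun _ => M) := by
  intro ι ρ T hfin
  obtain ⟨r, rfl⟩ : ∃ r : ι → ℕ → M, (fun i => (r i : (U : Filter ℕ).Product _)) = ρ :=
    ⟨fun i => (ρ i).out, funext fun i => Quotient.out_eq _⟩
  choose w hw using hfin
  obtain ⟨v, rfl⟩ : ∃ v : ℕ → ℕ → M, (fun n => (v n : (U : Filter ℕ).Product _)) = w :=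
    ⟨fun n => (w n).out, funext fun n => Quotient.out_eq _⟩
  simp only [realize_formula_sumElim_cast] at hw
  -- `v n m` satisfies the first `n` formulas at coordinate `m` for `U`-most `m`; the witness
  -- uses at coordinate `m` a `v n` with `n → ∞` along `U`
  obtain ⟨d, hd, hdv⟩ := exists_tendsto_atTop_eventually_mem hU
    (A := fun n => {m | ∀ k ≤ n, (T k).Realize (Sum.elim (r · m) fun _ => v n m)})
    fun n => (eventually_all_finite (finite_Iic n)).2 (hw n)
  refine ⟨(fun m => v (d m) m : ℕ → M), fun k => ?_⟩
  rw [realize_formula_sumElim_cast]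
  filter_upwards [hd.eventually_ge_atTop k, hdv] with m hkm hm using hm k hkm

theorem mk_le_two_power_aleph0 (hM : #M ≤ 2 ^ ℵ₀) :
    #((U : Filter ℕ).Product fun _ => M) ≤ 2 ^ ℵ₀ :=
  calc #((U : Filter ℕ).Product fun _ => M) ≤ #(ℕ → M) := mk_quotient_le
    _ = #M ^ ℵ₀ := by simp
    _ ≤ (2 ^ ℵ₀) ^ ℵ₀ := power_le_power_right hM
    _ = 2 ^ ℵ₀ := by rw [← power_mul, aleph0_mul_aleph0]

end Ultraproduct

theorem ElementarilyEquivalent.ultraproduct {M N : Type*} [L.Structure M] [L.Structure N]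
    [Nonempty M] [Nonempty N] (he : M ≅[L] N) {α : Type*} (u : Ultrafilter α) :
    ((u : Filter α).Product fun _ => M) ≅[L] (u : Filter α).Product fun _ => N :=
  elementarilyEquivalent_iff.2 fun φ => by
    simp only [Ultraproduct.sentence_realize, eventually_const, he.realize_sentence]

end FirstOrder.Language

/-- Keisler's theorem: assuming CH, if `M` and `N` are elementarily equivalent infinite
structures of cardinality at most `2^ℵ₀` in a countable language, then for every nonprincipal
ultrafilter `U` on `ω`, the ultrapowers `M^ω/U` and `N^ω/U` are isomorphic. -/
theorem stmt10 (ch : 2 ^ aleph0 = aleph 1)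
    (L : FirstOrder.Language.{0,0}) (hL : L.card ≤ aleph0)
    (M N : Type) [L.Structure M] [L.Structure N] [Infinite M] [Infinite N]
    (hM : #M ≤ 2 ^ aleph0) (hN : #N ≤ 2 ^ aleph0) (he : M ≅[L] N)
    (U : Ultrafilter ℕ) (hU : (U : Filter ℕ) ≤ Filter.cofinite) :
    Nonempty (((U : Filter ℕ).Product fun _ => M) ≃[L] ((U : Filter ℕ).Product fun _ => N)) := by
  have : Countable L.Symbols := mk_le_aleph0_iff.1 hL
  have ch₀ := two_power_aleph0_eq_aleph_one_congr_univ.{_, 0} ch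
  exact (he.ultraproduct U).nonempty_equiv_of_countablySaturated
    (Ultraproduct.countablySaturated U hU) (Ultraproduct.countablySaturated U hU)
    (ch₀ ▸ Ultraproduct.mk_le_two_power_aleph0 U hM)
    (ch₀ ▸ Ultraproduct.mk_le_two_power_aleph0 U hN)
end

section
/- If Cov(meagre) = 2^{ℵ₀}, then MA_κ(countable) holds for every cardinal κ < 2^{ℵ₀}: for every countable partial order P and every family A of κ many dense subsets of P, there is a filter G ⊆ P meeting every member of A. -/
/-!
Enumerate the countable order as `e : ℕ → P`. A sequence of bits `b` codes a descending chain
in `P`: at stage `n` the chain moves down to the `(Nat.unpair n).2`-th element if bit `n` is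
set and that element lies below the current one. Since every finite string of bits can be
extended so that the chain enters a given dense set, the bit sequences whose chain misses a
dense set form a nowhere dense subset of Cantor space, and the binary digit map `ℝ → (ℕ → Bool)`
pulls nowhere dense sets back to nowhere dense sets. Fewer than `Cov(meagre)` meagre subsets of
`ℝ` do not cover `ℝ`, so some real codes a chain meeting every dense set of the family; its
upward closure is the required filter.
-/

open Cardinal

/-- The covering number of the meagre ideal: the least cardinality of a family of meagre
subsets of `ℝ` covering `ℝ`. -/
noncomputable def covMeagre : Cardinal :=
  sInf {c | ∃ S : Set (Set ℝ), (∀ s ∈ S, IsMeagre s) ∧ ⋃₀ S = Set.univ ∧ #S = c}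

open Set PiNat

theorem isNowhereDense_iff_forall_isOpen_exists_disjoint {X : Type*} [TopologicalSpace X]
    {s : Set X} :
    IsNowhereDense s ↔
      ∀ U, IsOpen U → U.Nonempty → ∃ V ⊆ U, IsOpen V ∧ V.Nonempty ∧ Disjoint V s := by
  constructor
  · intro hs U hU hne
    refine ⟨U \ closure s, sdiff_subset, hU.sdiff isClosed_closure, ?_,
      disjoint_sdiff_left.mono_right subset_closure⟩
    by_contra hempty
    rw [not_nonempty_iff_eq_empty, sdiff_eq_empty] at hempty
    exact (hs ▸ interior_maximal hempty hU) hne.some_mem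
  · intro h
    rw [IsNowhereDense, ← not_nonempty_iff_eq_empty]
    intro hne
    obtain ⟨V, hVU, hV, hVne, hVs⟩ := h _ isOpen_interior hne
    obtain ⟨x, hx⟩ := hVne
    exact (hVs.closure_right hV).ne_of_mem hx (interior_subset (hVU hx)) rfl

theorem PiNat.exists_cylinder_subset {E : ℕ → Type*} [∀ n, TopologicalSpace (E n)]
    [∀ n, DiscreteTopology (E n)] {U : Set (∀ n, E n)} (hU : IsOpen U) {x : ∀ n, E n}
    (hx : x ∈ U) : ∃ n, cylinder x n ⊆ U := by
  obtain ⟨_, ⟨y, n, rfl⟩, hxy, hyU⟩ :=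
    (isTopologicalBasis_cylinders E).exists_subset_of_mem_open hx hU
  exact ⟨n, mem_cylinder_iff_eq.1 hxy ▸ hyU⟩

theorem PiNat.isNowhereDense_iff_forall_exists_cylinder_disjoint {E : ℕ → Type*}
    [∀ n, TopologicalSpace (E n)] [∀ n, DiscreteTopology (E n)] {A : Set (∀ n, E n)} :
    IsNowhereDense A ↔
      ∀ x n, ∃ y ∈ cylinder x n, ∃ m ≥ n, Disjoint (cylinder y m) A := by
  rw [isNowhereDense_iff_forall_isOpen_exists_disjoint]
  constructor
  · intro h x n
    obtain ⟨V, hVx, hV, ⟨y, hy⟩, hVA⟩ :=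
      h _ (isOpen_cylinder E x n) ⟨x, self_mem_cylinder x n⟩
    obtain ⟨m, hm⟩ := exists_cylinder_subset hV hy
    exact ⟨y, hVx hy, max m n, le_max_right m n,
      hVA.mono_left ((cylinder_anti y (le_max_left m n)).trans hm)⟩
  · intro h U hU ⟨x, hx⟩
    obtain ⟨n, hn⟩ := exists_cylinder_subset hU hx
    obtain ⟨y, hy, m, hm, hyA⟩ := h x n
    refine ⟨cylinder y m, ?_, isOpen_cylinder E y m, ⟨y, self_mem_cylinder y m⟩, hyA⟩
    rw [← mem_cylinder_iff_eq.1 hy] at hn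
    exact (cylinder_anti y hm).trans hn

section CodedChain

variable {P : Type*} [Preorder P] (e : ℕ → P)

open Classical in
-- Stage `n` offers `e n.unpair.2`, so every element of `P` is offered infinitely often.
noncomputable def codedChain (b : ℕ → Bool) : ℕ → P
  | 0 => e 0
  | n + 1 => if b n ∧ e n.unpair.2 ≤ codedChain b n then e n.unpair.2 else codedChain b n

theorem codedChain_succ_le (b : ℕ → Bool) (n : ℕ) :
    codedChain e b (n + 1) ≤ codedChain e b n := by
  rw [codedChain]
  split_ifs with h
  exacts [h.2, le_rfl]

theorem codedChain_antitone (b : ℕ → Bool) : Antitone (codedChain e b) :=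
  antitone_nat_of_succ_le (codedChain_succ_le e b)

theorem codedChain_eq_of_mem_cylinder {b b' : ℕ → Bool} {n : ℕ} (h : b' ∈ cylinder b n) :
    codedChain e b' n = codedChain e b n := by
  induction n with
  | zero => rfl
  | succ n ih =>
    have hb := mem_cylinder_iff.1 h
    rw [codedChain, codedChain, ih (cylinder_anti b n.le_succ h), hb n n.lt_succ_self]

theorem codedChain_eq_of_forall_eq_false {b : ℕ → Bool} {n m : ℕ} (hnm : n ≤ m)
    (hb : ∀ j, n ≤ j → j < m → b j = false) : codedChain e b m = codedChain e b n := by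
  induction m, hnm using Nat.le_induction with
  | base => rfl
  | succ m hnm ih =>
    rw [codedChain, if_neg (by simp [hb m hnm m.lt_succ_self]),
      ih fun j hj hjm => hb j hj (hjm.trans m.lt_succ_self)]

theorem exists_codedChain_mem (he : Function.Surjective e) {D : Set P}
    (hD : ∀ p, ∃ q ∈ D, q ≤ p) (b : ℕ → Bool) (n : ℕ) :
    ∃ b' ∈ cylinder b n, ∃ m ≥ n, codedChain e b' m ∈ D := by
  obtain ⟨q, hqD, hq⟩ := hD (codedChain e b n)
  obtain ⟨k, rfl⟩ := he q
  set N := Nat.pair n k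
  have hnN : n ≤ N := Nat.left_le_pair n k
  set b' : ℕ → Bool := fun j => if j < n then b j else decide (j = N)
  have hb' : b' ∈ cylinder b n := mem_cylinder_iff.2 fun j hj => if_pos hj
  have hstay : codedChain e b' N = codedChain e b n := by
    rw [codedChain_eq_of_forall_eq_false e hnN fun j hj hjN => by simp [b', hj.not_gt, hjN.ne],
      codedChain_eq_of_mem_cylinder e hb']
  refine ⟨b', hb', N + 1, by omega, ?_⟩
  have hbN : b' N = true := by simp [b', hnN.not_gt]
  rwa [codedChain, Nat.unpair_pair, hstay, if_pos ⟨hbN, hq⟩]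

theorem isNowhereDense_setOf_codedChain_notMem (he : Function.Surjective e) {D : Set P}
    (hD : ∀ p, ∃ q ∈ D, q ≤ p) : IsNowhereDense {b | ∀ m, codedChain e b m ∉ D} := by
  refine isNowhereDense_iff_forall_exists_cylinder_disjoint.2 fun b n => ?_
  obtain ⟨b', hb', m, hm, hmD⟩ := exists_codedChain_mem e he hD b n
  refine ⟨b', hb', m, hm, disjoint_left.2 fun b'' hb'' hbad => hbad m ?_⟩
  rwa [codedChain_eq_of_mem_cylinder e hb'']

end CodedChain

section BinaryDigits

-- `binDigits r j` is the `(j + 1)`-st binary digit of the fractional part of `r`; the first `m`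
-- digits are determined by `⌊r * 2 ^ m⌋`.
noncomputable def binDigits (r : ℝ) (j : ℕ) : Bool := decide (⌊r * 2 ^ (j + 1)⌋ % 2 = 1)

theorem floor_mul_two_pow_succ_div_two (r : ℝ) (n : ℕ) :
    ⌊r * 2 ^ (n + 1)⌋ / 2 = ⌊r * 2 ^ n⌋ := by
  have h : r * 2 ^ n = r * 2 ^ (n + 1) / (2 : ℕ) := by push_cast; ring
  rw [h, Int.floor_div_natCast, Nat.cast_ofNat]

theorem floor_mul_two_pow_eq_of_le {r s : ℝ} {n m : ℕ} (hnm : n ≤ m)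
    (h : ⌊s * 2 ^ m⌋ = ⌊r * 2 ^ m⌋) : ⌊s * 2 ^ n⌋ = ⌊r * 2 ^ n⌋ := by
  induction m, hnm using Nat.le_induction with
  | base => exact h
  | succ m _ ih =>
    rw [← floor_mul_two_pow_succ_div_two s, ← floor_mul_two_pow_succ_div_two r] at ih
    exact ih (by rw [h])

theorem binDigits_mem_cylinder_of_floor_eq {r s : ℝ} {m : ℕ}
    (h : ⌊s * 2 ^ m⌋ = ⌊r * 2 ^ m⌋) : binDigits s ∈ cylinder (binDigits r) m :=
  mem_cylinder_iff.2 fun j hj => by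
    rw [binDigits, binDigits, floor_mul_two_pow_eq_of_le hj h]

theorem exists_floor_eq_binDigits_eq (r : ℝ) (m : ℕ) (β : Bool) :
    ∃ s, ⌊s * 2 ^ m⌋ = ⌊r * 2 ^ m⌋ ∧ binDigits s m = β := by
  set c : ℤ := 2 * ⌊r * 2 ^ m⌋ + β.toNat
  have hc : ⌊((c : ℝ) / 2 ^ (m + 1)) * 2 ^ (m + 1)⌋ = c := by
    rw [div_mul_cancel₀ _ (by positivity), Int.floor_intCast]
  refine ⟨c / 2 ^ (m + 1), ?_, ?_⟩
  · rw [← floor_mul_two_pow_succ_div_two, hc]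
    cases β
    · simp [c]
    · simp [c]; omega
  · rw [binDigits, hc]
    cases β <;> simp [c]

theorem exists_floor_eq_binDigits_mem_cylinder {r : ℝ} {n m : ℕ} (hnm : n ≤ m)
    {y : ℕ → Bool} (hy : y ∈ cylinder (binDigits r) n) :
    ∃ s, ⌊s * 2 ^ n⌋ = ⌊r * 2 ^ n⌋ ∧ binDigits s ∈ cylinder y m := by
  induction m, hnm using Nat.le_induction with
  | base => exact ⟨r, rfl, (mem_cylinder_comm _ _ _).1 hy⟩
  | succ m hnm ih =>
    obtain ⟨s, hsn, hsy⟩ := ih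
    obtain ⟨t, hts, htm⟩ := exists_floor_eq_binDigits_eq s m (y m)
    refine ⟨t, (floor_mul_two_pow_eq_of_le hnm hts).trans hsn, mem_cylinder_iff.2 fun j hj => ?_⟩
    rcases (Nat.lt_succ_iff_lt_or_eq.1 hj) with hj | rfl
    · rw [mem_cylinder_iff.1 (binDigits_mem_cylinder_of_floor_eq hts) j hj,
        mem_cylinder_iff.1 hsy j hj]
    · exact htm

theorem exists_isOpen_forall_floor_mul_two_pow_eq (r : ℝ) (m : ℕ) :
    ∃ V : Set ℝ, IsOpen V ∧ V.Nonempty ∧ ∀ s ∈ V, ⌊s * 2 ^ m⌋ = ⌊r * 2 ^ m⌋ := by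
  set c := ⌊r * 2 ^ m⌋
  refine ⟨(· * 2 ^ m) ⁻¹' Ioo (c : ℝ) (c + 1), isOpen_Ioo.preimage (by fun_prop),
    ⟨(c + 1 / 2) / 2 ^ m, ?_⟩, fun s hs => Int.floor_eq_iff.2 ⟨hs.1.le, hs.2⟩⟩
  rw [mem_preimage, div_mul_cancel₀ _ (by positivity)]
  constructor <;> linarith

theorem exists_forall_floor_mul_two_pow_eq_mem {U : Set ℝ} (hU : IsOpen U) {r : ℝ}
    (hr : r ∈ U) : ∃ n : ℕ, ∀ s, ⌊s * 2 ^ n⌋ = ⌊r * 2 ^ n⌋ → s ∈ U := by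
  obtain ⟨ε, hε, hball⟩ := Metric.isOpen_iff.1 hU r hr
  obtain ⟨n, hn⟩ := exists_pow_lt_of_lt_one hε (by norm_num : (1 / 2 : ℝ) < 1)
  refine ⟨n, fun s hs => hball ?_⟩
  have h := Int.abs_sub_lt_one_of_floor_eq_floor hs
  rw [← sub_mul, abs_mul, abs_of_pos (by positivity : (0 : ℝ) < 2 ^ n),
    ← lt_div_iff₀ (by positivity)] at h
  rw [Metric.mem_ball, Real.dist_eq]
  calc |s - r| < 1 / 2 ^ n := h
    _ = (1 / 2) ^ n := by rw [one_div_pow]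
    _ < ε := hn

theorem IsNowhereDense.preimage_binDigits {A : Set (ℕ → Bool)} (hA : IsNowhereDense A) :
    IsNowhereDense (binDigits ⁻¹' A) := by
  refine isNowhereDense_iff_forall_isOpen_exists_disjoint.2 fun U hU ⟨r, hr⟩ => ?_
  obtain ⟨n, hn⟩ := exists_forall_floor_mul_two_pow_eq_mem hU hr
  obtain ⟨y, hy, m, hnm, hyA⟩ :=
    isNowhereDense_iff_forall_exists_cylinder_disjoint.1 hA (binDigits r) n
  obtain ⟨s, hsr, hsy⟩ := exists_floor_eq_binDigits_mem_cylinder hnm hy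
  obtain ⟨V, hV, hVne, hVs⟩ := exists_isOpen_forall_floor_mul_two_pow_eq s m
  refine ⟨V, fun t ht => hn t ((floor_mul_two_pow_eq_of_le hnm (hVs t ht)).trans hsr), hV, hVne,
    disjoint_left.2 fun t ht htA => disjoint_left.1 hyA ?_ htA⟩
  rw [mem_cylinder_iff_eq, ← mem_cylinder_iff_eq.1 hsy]
  exact mem_cylinder_iff_eq.1 (binDigits_mem_cylinder_of_floor_eq (hVs t ht))

end BinaryDigits

theorem exists_forall_notMem_of_mk_lt_covMeagre {ι : Type} {S : ι → Set ℝ}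
    (hS : ∀ i, IsMeagre (S i)) (hι : #ι < covMeagre) : ∃ r, ∀ i, r ∉ S i := by
  by_contra! hcover
  have hcov : covMeagre ≤ #(range S) :=
    csInf_le' ⟨range S, forall_mem_range.2 hS,
      eq_univ_of_forall fun r => mem_sUnion.2 (by simpa using hcover r), rfl⟩
  exact (hcov.trans mk_range_le).not_gt hι

theorem Antitone.exists_filter_meeting {P ι : Type*} [Preorder P] {x : ℕ → P} (hx : Antitone x)
    {D : ι → Set P} (hD : ∀ i, ∃ m, x m ∈ D i) :
    ∃ G : Set P,
      (∀ p ∈ G, ∀ q : P, p ≤ q → q ∈ G) ∧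
      (∀ p ∈ G, ∀ q ∈ G, ∃ r ∈ G, r ≤ p ∧ r ≤ q) ∧
      (∀ i, ∃ p ∈ G, p ∈ D i) := by
  refine ⟨{q | ∃ m, x m ≤ q}, ?_, ?_, fun i => ?_⟩
  · rintro p ⟨m, hm⟩ q hpq
    exact ⟨m, hm.trans hpq⟩
  · rintro p ⟨m, hm⟩ q ⟨n, hn⟩
    exact ⟨x (max m n), ⟨_, le_rfl⟩, (hx (le_max_left m n)).trans hm,
      (hx (le_max_right m n)).trans hn⟩
  · obtain ⟨m, hm⟩ := hD i
    exact ⟨x m, ⟨m, le_rfl⟩, hm⟩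

/-- If `Cov(meagre) = 2^ℵ₀`, then `MA_κ(countable)` holds for every `κ < 2^ℵ₀`: for every
nonempty countable partial order `P` and every family of `κ` many dense subsets of `P`, there
is a filter `G ⊆ P` meeting every member of the family. -/
theorem stmt12 (h : covMeagre = 2 ^ aleph0) (κ : Cardinal) (hκ : κ < 2 ^ aleph0)
    (P : Type) [PartialOrder P] [Countable P] [Nonempty P]
    (ι : Type) (hι : #ι = κ) (D : ι → Set P) (hD : ∀ i, ∀ p : P, ∃ q ∈ D i, q ≤ p) :
    ∃ G : Set P,
      (∀ p ∈ G, ∀ q : P, p ≤ q → q ∈ G) ∧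
      (∀ p ∈ G, ∀ q ∈ G, ∃ r ∈ G, r ≤ p ∧ r ≤ q) ∧
      (∀ i, ∃ p ∈ G, p ∈ D i) := by
  obtain ⟨e, he⟩ := exists_surjective_nat P
  obtain ⟨r, hr⟩ := exists_forall_notMem_of_mk_lt_covMeagre
    (S := fun i => binDigits ⁻¹' {b | ∀ m, codedChain e b m ∉ D i})
    (fun i => (isNowhereDense_setOf_codedChain_notMem e he (hD i)).preimage_binDigits.isMeagre)
    (by rwa [hι, h])
  exact (codedChain_antitone e (binDigits r)).exists_filter_meeting fun i => by
    simpa using hr i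
end
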